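/- arXiv:1610.00833 — 5 statements merged into one kernel-verified Lean document; each statement's English description precedes it below -/
import Mathlib

section
/- Let a, b be positive integers and A a nonnegative symmetric irreducible n×n real matrix with largest eigenvalue μ. Let μ' be the largest root of f(x) = x² - ax - b, let B = f(A) = A² - aA - bI, and let B_j = Σ_{i=1}^n B_{ij} denote the j-th column sum of B. If B_j ≤ 0 for all j = 1, …, n, then μ ≤ μ', with equality if and only if B_j = 0 for all j. -/
/-!
Since `A` is symmetric, `μ • 1 - A` is positive semidefinite, so for an eigenvector `w` of `μ`
the vector `|w|` is one as well; irreducibility makes it strictly positive. For this positive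
`v` we have `B v = f(μ) v`, and pairing with the column sums gives `f(μ) ∑ vⱼ = ∑ Bⱼ vⱼ ≤ 0`,
with equality iff every `Bⱼ = 0`. Finally `μ ≥ 0` lies above the smaller root of `f`, so
`f(μ) ≤ 0` means `μ ≤ μ'`, and `f(μ) = 0` means `μ = μ'`.
-/

open Matrix

/-- A nonnegative matrix is irreducible if for every nonempty proper subset `S` of indices
there is a nonzero entry from `S` to its complement. -/
def MatrixIrreducible {n : ℕ} (A : Matrix (Fin n) (Fin n) ℝ) : Prop :=
  ∀ S : Set (Fin n), S.Nonempty → S ≠ Set.univ → ∃ i ∈ S, ∃ j ∉ S, A i j ≠ 0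

section Eigenvectors

variable {ι : Type*} [Fintype ι]

lemma Matrix.nonempty_of_mem_spectrum [DecidableEq ι] {A : Matrix ι ι ℝ} {μ : ℝ}
    (hμ : μ ∈ spectrum ℝ A) : Nonempty ι := by
  by_contra hι
  rw [not_nonempty_iff] at hι
  exact spectrum.mem_iff.mp hμ (isUnit_of_subsingleton _)

lemma Matrix.exists_mulVec_eq_smul_of_mem_spectrum [DecidableEq ι] {A : Matrix ι ι ℝ} {μ : ℝ}
    (hμ : μ ∈ spectrum ℝ A) : ∃ w, w ≠ 0 ∧ A *ᵥ w = μ • w := by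
  rw [← Matrix.spectrum_toLin', ← Module.End.hasEigenvalue_iff_mem_spectrum] at hμ
  obtain ⟨w, hw⟩ := hμ.exists_hasEigenvector
  exact ⟨w, hw.2, by simpa using Module.End.mem_eigenspace_iff.mp hw.1⟩

lemma Matrix.IsSymm.posSemidef_smul_one_sub [DecidableEq ι] {A : Matrix ι ι ℝ} (hA : A.IsSymm)
    {μ : ℝ} (hμ : ∀ x ∈ spectrum ℝ A, x ≤ μ) : (μ • (1 : Matrix ι ι ℝ) - A).PosSemidef := by
  rw [← Algebra.algebraMap_eq_smul_one]
  have hM : (algebraMap ℝ (Matrix ι ι ℝ) μ - A).IsHermitian :=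
    isHermitian_iff_isSymm.mpr <| by
      simp [IsSymm, transpose_sub, hA.eq, Algebra.algebraMap_eq_smul_one]
  refine hM.posSemidef_iff_eigenvalues_nonneg.mpr fun i => ?_
  have hmem := hM.eigenvalues_mem_spectrum_real i
  rw [← spectrum.singleton_sub_eq] at hmem
  obtain ⟨x, hx, y, hy, hxy⟩ := hmem
  rw [Set.mem_singleton_iff] at hx
  rw [Pi.zero_apply, ← hxy, hx]
  linarith [hμ y hy]

lemma Matrix.dotProduct_mulVec_le_abs {A : Matrix ι ι ℝ} (hA : ∀ i j, 0 ≤ A i j) (w : ι → ℝ) :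
    w ⬝ᵥ (A *ᵥ w) ≤ |w| ⬝ᵥ (A *ᵥ |w|) := by
  simp only [dotProduct, mulVec, Finset.mul_sum, Pi.abs_apply]
  refine Finset.sum_le_sum fun i _ => Finset.sum_le_sum fun j _ => ?_
  calc w i * (A i j * w j) = A i j * (w i * w j) := by ring
    _ ≤ A i j * (|w i| * |w j|) :=
        mul_le_mul_of_nonneg_left (abs_mul (w i) (w j) ▸ le_abs_self _) (hA i j)
    _ = |w i| * (A i j * |w j|) := by ring

/-- The quadratic form of `μ • 1 - A` is `≥ 0` everywhere and not larger at `|w|` than at `w`,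
where it vanishes; positive semidefiniteness then puts `|w|` in its kernel. -/
lemma Matrix.IsSymm.exists_nonneg_eigenvector [DecidableEq ι] {A : Matrix ι ι ℝ}
    (hA : ∀ i j, 0 ≤ A i j) (hsymm : A.IsSymm) {μ : ℝ} (hμmem : μ ∈ spectrum ℝ A)
    (hμmax : ∀ x ∈ spectrum ℝ A, x ≤ μ) :
    ∃ v, v ≠ 0 ∧ 0 ≤ v ∧ A *ᵥ v = μ • v := by
  obtain ⟨w, hw0, hw⟩ := exists_mulVec_eq_smul_of_mem_spectrum hμmem
  set M := μ • (1 : Matrix ι ι ℝ) - A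
  have hpsd : M.PosSemidef := hsymm.posSemidef_smul_one_sub hμmax
  have quadForm (u : ι → ℝ) : u ⬝ᵥ (M *ᵥ u) = μ * (u ⬝ᵥ u) - u ⬝ᵥ (A *ᵥ u) := by
    rw [sub_mulVec, smul_mulVec, one_mulVec, dotProduct_sub, dotProduct_smul, smul_eq_mul]
  have hww : w ⬝ᵥ (M *ᵥ w) = 0 := by
    rw [quadForm, hw, dotProduct_smul, smul_eq_mul, sub_self]
  have hnorm : |w| ⬝ᵥ |w| = w ⬝ᵥ w := by
    simp only [dotProduct, Pi.abs_apply, abs_mul_abs_self]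
  have hvv : |w| ⬝ᵥ (M *ᵥ |w|) = 0 := by
    have hle : |w| ⬝ᵥ (M *ᵥ |w|) ≤ 0 := by
      rw [quadForm, hnorm]
      rw [quadForm] at hww
      linarith [dotProduct_mulVec_le_abs hA w]
    have hge := hpsd.dotProduct_mulVec_nonneg |w|
    rw [star_trivial] at hge
    linarith
  have hMv : M *ᵥ |w| = 0 :=
    (hpsd.dotProduct_mulVec_zero_iff |w|).mp (by rwa [star_trivial])
  refine ⟨|w|, by simpa using hw0, abs_nonneg w, ?_⟩
  rw [sub_mulVec, smul_mulVec, one_mulVec] at hMv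
  exact (sub_eq_zero.mp hMv).symm

lemma Matrix.eigenvalue_nonneg_of_pos_eigenvector [Nonempty ι] {A : Matrix ι ι ℝ}
    (hA : ∀ i j, 0 ≤ A i j) {μ : ℝ} {v : ι → ℝ} (hv : ∀ i, 0 < v i) (hAv : A *ᵥ v = μ • v) :
    0 ≤ μ := by
  obtain ⟨i⟩ := ‹Nonempty ι›
  have : 0 ≤ μ * v i := by
    rw [← smul_eq_mul, ← Pi.smul_apply, ← hAv]
    exact Finset.sum_nonneg fun j _ => mul_nonneg (hA i j) (hv j).le
  exact nonneg_of_mul_nonneg_left this (hv i)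

end Eigenvectors

/-- No nonzero entry `A k j` leads from the zero set of `v` to its support, because
`(A v) k = μ v k = 0`; irreducibility then forces the zero set to be empty. -/
lemma MatrixIrreducible.pos_of_nonneg_eigenvector {n : ℕ} {A : Matrix (Fin n) (Fin n) ℝ}
    (hirr : MatrixIrreducible A) (hA : ∀ i j, 0 ≤ A i j) {μ : ℝ} {v : Fin n → ℝ} (hv0 : v ≠ 0)
    (hv : 0 ≤ v) (hAv : A *ᵥ v = μ • v) (i : Fin n) : 0 < v i := by
  by_contra hi
  have hvi : v i = 0 := le_antisymm (not_lt.mp hi) (hv i)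
  have hSuniv : {k | v k = 0} ≠ Set.univ := fun h =>
    hv0 (funext fun k => (Set.eq_univ_iff_forall.mp h k : v k = 0))
  obtain ⟨k, hk, j, hj, hAkj⟩ := hirr {k | v k = 0} ⟨i, hvi⟩ hSuniv
  have hvj : 0 < v j := lt_of_le_of_ne (hv j) (Ne.symm hj)
  have hterm : 0 < A k j * v j := mul_pos (lt_of_le_of_ne (hA k j) (Ne.symm hAkj)) hvj
  have hsum : A k j * v j ≤ (A *ᵥ v) k :=
    Finset.single_le_sum (f := fun l => A k l * v l)
      (fun l _ => mul_nonneg (hA k l) (hv l)) (Finset.mem_univ j)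
  rw [hAv, Pi.smul_apply, smul_eq_mul, show v k = 0 from hk, mul_zero] at hsum
  linarith

lemma MatrixIrreducible.exists_pos_eigenvector {n : ℕ} {A : Matrix (Fin n) (Fin n) ℝ}
    (hirr : MatrixIrreducible A) (hA : ∀ i j, 0 ≤ A i j) (hsymm : A.IsSymm) {μ : ℝ}
    (hμmem : μ ∈ spectrum ℝ A) (hμmax : ∀ x ∈ spectrum ℝ A, x ≤ μ) :
    ∃ v, (∀ i, 0 < v i) ∧ A *ᵥ v = μ • v := by
  obtain ⟨v, hv0, hv, hAv⟩ := hsymm.exists_nonneg_eigenvector hA hμmem hμmax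
  exact ⟨v, hirr.pos_of_nonneg_eigenvector hA hv0 hv hAv, hAv⟩

lemma eigenvalue_nonpos_of_colSum_nonpos {ι : Type*} [Fintype ι] [Nonempty ι]
    {M : Matrix ι ι ℝ} {c : ℝ} {v : ι → ℝ} (hv : ∀ i, 0 < v i) (hMv : M *ᵥ v = c • v)
    (hcol : ∀ j, ∑ i, M i j ≤ 0) : c ≤ 0 ∧ (c = 0 ↔ ∀ j, ∑ i, M i j = 0) := by
  have hpair : ∑ j, (∑ i, M i j) * v j = c * ∑ j, v j := by
    calc ∑ j, (∑ i, M i j) * v j = ∑ i, (M *ᵥ v) i := by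
          simp only [mulVec, dotProduct, Finset.sum_mul]
          exact Finset.sum_comm
      _ = c * ∑ j, v j := by simp [hMv, Finset.mul_sum]
  have hterm : ∀ j ∈ Finset.univ, (∑ i, M i j) * v j ≤ 0 :=
    fun j _ => mul_nonpos_of_nonpos_of_nonneg (hcol j) (hv j).le
  have hvsum : 0 < ∑ j, v j := Finset.sum_pos (fun j _ => hv j) Finset.univ_nonempty
  refine ⟨nonpos_of_mul_nonpos_left (hpair ▸ Finset.sum_nonpos hterm) hvsum, ?_⟩
  rw [← mul_eq_zero_iff_right hvsum.ne', ← hpair, Finset.sum_eq_zero_iff_of_nonpos hterm]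
  simp only [Finset.mem_univ, true_implies, mul_eq_zero_iff_right (hv _).ne']

section LargerRoot

variable {a b x : ℝ}

lemma sq_sub_mul_sub_eq_mul_sub_roots (hdisc : 0 ≤ a ^ 2 + 4 * b) :
    x ^ 2 - a * x - b
      = (x - (a + √(a ^ 2 + 4 * b)) / 2) * (x - (a - √(a ^ 2 + 4 * b)) / 2) := by
  linear_combination (Real.sq_sqrt hdisc) / 4

lemma sub_smaller_root_pos (hb : 0 < b) (hx : 0 ≤ x) : 0 < x - (a - √(a ^ 2 + 4 * b)) / 2 := by
  have : a < √(a ^ 2 + 4 * b) :=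
    (le_abs_self a).trans_lt (Real.lt_sqrt (abs_nonneg a) |>.mpr (by rw [sq_abs]; linarith))
  linarith

lemma sq_sub_mul_sub_nonpos_iff (hb : 0 < b) (hx : 0 ≤ x) :
    x ^ 2 - a * x - b ≤ 0 ↔ x ≤ (a + √(a ^ 2 + 4 * b)) / 2 := by
  rw [sq_sub_mul_sub_eq_mul_sub_roots (by positivity),
    ← zero_mul (x - _), mul_le_mul_iff_left₀ (sub_smaller_root_pos hb hx), sub_nonpos]

lemma sq_sub_mul_sub_eq_zero_iff (hb : 0 < b) (hx : 0 ≤ x) :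
    x ^ 2 - a * x - b = 0 ↔ x = (a + √(a ^ 2 + 4 * b)) / 2 := by
  rw [sq_sub_mul_sub_eq_mul_sub_roots (by positivity),
    mul_eq_zero_iff_right (sub_smaller_root_pos hb hx).ne', sub_eq_zero]

end LargerRoot

theorem stmt_0_general {n : ℕ} (a b : ℕ) (hb : 0 < b)
    (A : Matrix (Fin n) (Fin n) ℝ)
    (hnonneg : ∀ i j, 0 ≤ A i j) (hsymm : A.IsSymm) (hirr : MatrixIrreducible A)
    (μ : ℝ) (hμmem : μ ∈ spectrum ℝ A) (hμmax : ∀ x ∈ spectrum ℝ A, x ≤ μ)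
    (μ' : ℝ) (hμ' : μ' = ((a : ℝ) + Real.sqrt ((a : ℝ) ^ 2 + 4 * b)) / 2)
    (B : Matrix (Fin n) (Fin n) ℝ)
    (hB : B = A * A - (a : ℝ) • A - (b : ℝ) • (1 : Matrix (Fin n) (Fin n) ℝ))
    (hcol : ∀ j, ∑ i, B i j ≤ 0) :
    μ ≤ μ' ∧ (μ = μ' ↔ ∀ j, ∑ i, B i j = 0) := by
  have := nonempty_of_mem_spectrum hμmem
  obtain ⟨v, hv, hAv⟩ := hirr.exists_pos_eigenvector hnonneg hsymm hμmem hμmax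
  have hBv : B *ᵥ v = (μ ^ 2 - a * μ - b) • v := by
    rw [hB, sub_mulVec, sub_mulVec, ← mulVec_mulVec, smul_mulVec, smul_mulVec, one_mulVec,
      hAv, mulVec_smul, hAv]
    module
  obtain ⟨hc, hc0⟩ := eigenvalue_nonpos_of_colSum_nonpos hv hBv hcol
  have hμ0 := eigenvalue_nonneg_of_pos_eigenvector hnonneg hv hAv
  have hb_real : (0 : ℝ) < b := by exact_mod_cast hb
  subst hμ'
  exact ⟨(sq_sub_mul_sub_nonpos_iff hb_real hμ0).mp hc,
    (sq_sub_mul_sub_eq_zero_iff hb_real hμ0).symm.trans hc0⟩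

theorem stmt_0 {n : ℕ} (a b : ℕ) (ha : 0 < a) (hb : 0 < b)
    (A : Matrix (Fin n) (Fin n) ℝ)
    (hnonneg : ∀ i j, 0 ≤ A i j) (hsymm : A.IsSymm) (hirr : MatrixIrreducible A)
    (μ : ℝ) (hμmem : μ ∈ spectrum ℝ A) (hμmax : ∀ x ∈ spectrum ℝ A, x ≤ μ)
    (μ' : ℝ) (hμ' : μ' = ((a : ℝ) + Real.sqrt ((a : ℝ) ^ 2 + 4 * b)) / 2)
    (B : Matrix (Fin n) (Fin n) ℝ)
    (hB : B = A * A - (a : ℝ) • A - (b : ℝ) • (1 : Matrix (Fin n) (Fin n) ℝ))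
    (hcol : ∀ j, ∑ i, B i j ≤ 0) :
    μ ≤ μ' ∧ (μ = μ' ↔ ∀ j, ∑ i, B i j = 0) :=
  stmt_0_general a b hb A hnonneg hsymm hirr μ hμmem hμmax μ' hμ' B hB hcol
end

section
/- Let k ≥ 1 and n ≥ 5k/2, and let G be a simple graph of order n. If G contains no matching of size k, then e(G) ≤ e(S_{n,k-1}), with equality if and only if G ≅ S_{n,k-1}. -/
/-!
Induction on `k`. If some vertex `v` has degree at least `2k - 1`, then `G - v` has no matching
of size `k - 1`: such a matching covers only `2k - 2` vertices, so it extends by an edge at `v`.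
Hence `e(G) = e(G - v) + deg v ≤ e(S_{n-1,k-2}) + (n - 1) = e(S_{n,k-1})`, and equality forces `v`
to be universal and `G - v ≅ S_{n-1,k-2}`, so that `G ≅ S_{n,k-1}`.

Otherwise every degree is at most `2k - 2`, and then `e(G) ≤ (k - 1)(2k - 1)`, which is less than
`e(S_{n,k-1})` once `2n ≥ 5k`. For this fix a maximum matching and call a matched vertex heavy if
it has at least two unmatched neighbours, and light if neither it nor its partner is heavy.
Excluding augmenting paths of length three and five shows that the partner of a heavy vertex has
no unmatched neighbour, and that its only neighbours besides heavy vertices are light vertices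
whose partners have no unmatched neighbour. Counting the edges at unmatched vertices, at heavy
vertices, at their partners and among light vertices then gives the bound.
-/

open SimpleGraph Finset

/-- `S_{n,k} = K_k ∨ \overline{K_{n-k}}` on vertex set `Fin n`: the first `k` vertices form a
clique joined to everything else. -/
def Snk (n k : ℕ) : SimpleGraph (Fin n) where
  Adj i j := i ≠ j ∧ ((i : ℕ) < k ∨ (j : ℕ) < k)
  symm := by constructor; intro i j ⟨h1, h2⟩; exact ⟨h1.symm, h2.symm⟩
  loopless := by constructor; intro i ⟨h1, _⟩; exact h1 rfl

/-- `G` has a matching of size `k`. -/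
def HasMatchingOfSize {V : Type*} [DecidableEq V] (G : SimpleGraph V) (k : ℕ) : Prop :=
  ∃ M : Finset (Sym2 V), (M : Set (Sym2 V)) ⊆ G.edgeSet ∧ M.card = k ∧
    ∀ e ∈ M, ∀ f ∈ M, e ≠ f → ∀ v : V, ¬(v ∈ e ∧ v ∈ f)

instance (n k : ℕ) : DecidableRel (Snk n k).Adj := fun _ _ => instDecidableAnd

lemma Nat.two_mul_choose_two_add_self (n : ℕ) : 2 * n.choose 2 + n = n * n := by
  induction n with
  | zero => rfl
  | succ n ih =>
    rw [Nat.choose_succ_succ', Nat.choose_one_right]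
    linarith

/-- The edge count of the bounded-degree case, with `h` heavy vertices and `L` light ones, of which
`S` have an unmatched neighbour and `F` have a partner without one. -/
lemma heavy_light_count_le {K h L S F : ℕ} (hL : 2 * h + L ≤ 2 * K) (hSF : S + F = L) :
    h * (2 * K) + S + h * F + L.choose 2 ≤ K * (2 * K + 1) := by
  have hc := Nat.two_mul_choose_two_add_self L
  rcases Nat.eq_zero_or_pos h with rfl | hh
  · nlinarith
  · nlinarith [Nat.mul_le_mul_left S hh]

namespace SimpleGraph

section Matching

variable {V : Type*} {G : SimpleGraph V}

def IsEdgeMatching (G : SimpleGraph V) (M : Finset (Sym2 V)) : Prop :=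
  (M : Set (Sym2 V)) ⊆ G.edgeSet ∧ ∀ e ∈ M, ∀ f ∈ M, e ≠ f → ∀ v : V, ¬(v ∈ e ∧ v ∈ f)

def IsMaximumMatching (G : SimpleGraph V) (M : Finset (Sym2 V)) : Prop :=
  G.IsEdgeMatching M ∧ ∀ M', G.IsEdgeMatching M' → #M' ≤ #M

lemma IsEdgeMatching.mono {M M' : Finset (Sym2 V)} (hM : G.IsEdgeMatching M) (h : M' ⊆ M) :
    G.IsEdgeMatching M' :=
  ⟨fun _ he => hM.1 (h he), fun e he f hf => hM.2 e (h he) f (h hf)⟩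

lemma IsEdgeMatching.eq_of_mem_of_mem {M : Finset (Sym2 V)} (hM : G.IsEdgeMatching M)
    {e f : Sym2 V} {v : V} (he : e ∈ M) (hf : f ∈ M) (hve : v ∈ e) (hvf : v ∈ f) : e = f := by
  by_contra hne
  exact hM.2 e he f hf hne v ⟨hve, hvf⟩

lemma exists_isMaximumMatching [Fintype G.edgeSet] : ∃ M, G.IsMaximumMatching M := by
  classical
  have hmem : ∀ M, G.IsEdgeMatching M → M ∈ G.edgeFinset.powerset.filter G.IsEdgeMatching :=
    fun M hM => Finset.mem_filter.2
      ⟨Finset.mem_powerset.2 fun _ he => mem_edgeFinset.2 (hM.1 he), hM⟩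
  obtain ⟨M, hM, hmax⟩ := Finset.exists_max_image _ Finset.card
    ⟨∅, hmem ∅ ⟨by simp, by simp⟩⟩
  exact ⟨M, (Finset.mem_filter.1 hM).2, fun M' hM' => hmax M' (hmem M' hM')⟩

variable [DecidableEq V]

def matchedVerts (M : Finset (Sym2 V)) : Finset V := M.biUnion Sym2.toFinset

@[simp]
lemma mem_matchedVerts {M : Finset (Sym2 V)} {v : V} :
    v ∈ matchedVerts M ↔ ∃ e ∈ M, v ∈ e := by
  simp [matchedVerts]

lemma mem_matchedVerts_insert {M : Finset (Sym2 V)} {x y v : V} :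
    v ∈ matchedVerts (insert s(x, y) M) ↔ v = x ∨ v = y ∨ v ∈ matchedVerts M := by
  simp [or_assoc]

lemma matchedVerts_mono {M M' : Finset (Sym2 V)} (h : M' ⊆ M) :
    matchedVerts M' ⊆ matchedVerts M :=
  Finset.biUnion_subset_biUnion_of_subset_left _ h

lemma mk_notMem_of_notMem_matchedVerts {M : Finset (Sym2 V)} {x y : V}
    (hx : x ∉ matchedVerts M) : s(x, y) ∉ M :=
  fun h => hx (mem_matchedVerts.2 ⟨_, h, Sym2.mem_mk_left x y⟩)

lemma hasMatchingOfSize_iff {k : ℕ} :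
    HasMatchingOfSize G k ↔ ∃ M, G.IsEdgeMatching M ∧ #M = k :=
  ⟨fun ⟨M, h1, h2, h3⟩ => ⟨M, ⟨h1, h3⟩, h2⟩, fun ⟨M, ⟨h1, h3⟩, h2⟩ => ⟨M, h1, h2, h3⟩⟩

lemma card_lt_of_not_hasMatchingOfSize {k : ℕ} (hk : ¬ HasMatchingOfSize G k)
    {M : Finset (Sym2 V)} (hM : G.IsEdgeMatching M) : #M < k := by
  by_contra! hc
  obtain ⟨M', hsub, hcard⟩ := Finset.exists_subset_card_eq hc
  exact hk (hasMatchingOfSize_iff.2 ⟨M', hM.mono hsub, hcard⟩)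

lemma eq_bot_of_not_hasMatchingOfSize_one (hG : ¬ HasMatchingOfSize G 1) : G = ⊥ := by
  ext x y
  exact ⟨fun hxy => hG ⟨{s(x, y)}, by simpa using hxy, rfl, by simp⟩, False.elim⟩

noncomputable def partner (M : Finset (Sym2 V)) (v : V) : V :=
  if h : ∃ e ∈ M, v ∈ e then Sym2.Mem.other' h.choose_spec.2 else v

lemma mk_partner_mem {M : Finset (Sym2 V)} {v : V} (hv : v ∈ matchedVerts M) :
    s(v, partner M v) ∈ M := by
  rw [mem_matchedVerts] at hv
  rw [partner, dif_pos hv, Sym2.other_spec' hv.choose_spec.2]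
  exact hv.choose_spec.1

lemma partner_mem_matchedVerts {M : Finset (Sym2 V)} {v : V} (hv : v ∈ matchedVerts M) :
    partner M v ∈ matchedVerts M :=
  mem_matchedVerts.2 ⟨_, mk_partner_mem hv, Sym2.mem_mk_right _ _⟩

namespace IsEdgeMatching

variable {M : Finset (Sym2 V)} (hM : G.IsEdgeMatching M)
include hM

lemma insert {x y : V} (hxy : G.Adj x y) (hx : x ∉ matchedVerts M) (hy : y ∉ matchedVerts M) :
    G.IsEdgeMatching (insert s(x, y) M) := by
  refine ⟨?_, ?_⟩
  · rw [Finset.coe_insert, Set.insert_subset_iff]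
    exact ⟨hxy, hM.1⟩
  · have hfresh : ∀ f ∈ M, ∀ v, v ∈ s(x, y) → v ∉ f := by
      rintro f hf v hv hvf
      rcases Sym2.mem_iff.1 hv with rfl | rfl
      exacts [hx (mem_matchedVerts.2 ⟨f, hf, hvf⟩), hy (mem_matchedVerts.2 ⟨f, hf, hvf⟩)]
    intro e he f hf hef v hv
    rcases Finset.mem_insert.1 he with rfl | he <;> rcases Finset.mem_insert.1 hf with rfl | hf
    · exact hef rfl
    · exact hfresh f hf v hv.1 hv.2
    · exact hfresh e he v hv.2 hv.1
    · exact hM.2 e he f hf hef v hv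

lemma notMem_matchedVerts_erase {e : Sym2 V} {v : V} (he : e ∈ M) (hv : v ∈ e) :
    v ∉ matchedVerts (M.erase e) := by
  rw [mem_matchedVerts]
  rintro ⟨f, hf, hvf⟩
  exact Finset.ne_of_mem_erase hf (hM.eq_of_mem_of_mem (Finset.mem_of_mem_erase hf) he hvf hv)

lemma card_matchedVerts : #(matchedVerts M) = 2 * #M := by
  rw [matchedVerts, Finset.card_biUnion, Finset.sum_const_nat, mul_comm]
  · exact fun e he => Sym2.card_toFinset_of_not_isDiag e (G.not_isDiag_of_mem_edgeSet (hM.1 he))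
  · intro e he f hf hef
    simp only [Function.onFun, Finset.disjoint_left, Sym2.mem_toFinset]
    exact fun v hve hvf => hM.2 e he f hf hef v ⟨hve, hvf⟩

lemma adj_partner {v : V} (hv : v ∈ matchedVerts M) : G.Adj v (partner M v) :=
  hM.1 (mk_partner_mem hv)

lemma eq_mk_partner {e : Sym2 V} {v : V} (he : e ∈ M) (hv : v ∈ e) : e = s(v, partner M v) :=
  hM.eq_of_mem_of_mem he (mk_partner_mem (mem_matchedVerts.2 ⟨e, he, hv⟩)) hv
    (Sym2.mem_mk_left _ _)

lemma partner_partner {v : V} (hv : v ∈ matchedVerts M) : partner M (partner M v) = v := by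
  have h := hM.eq_mk_partner (mk_partner_mem hv) (Sym2.mem_mk_right _ _)
  rcases Sym2.eq_iff.1 h with ⟨h, -⟩ | ⟨h, -⟩
  · exact absurd h (hM.adj_partner hv).ne
  · exact h.symm

end IsEdgeMatching

namespace IsMaximumMatching

variable {M : Finset (Sym2 V)} (hM : G.IsMaximumMatching M)
include hM

lemma not_adj {x y : V} (hx : x ∉ matchedVerts M) (hy : y ∉ matchedVerts M) :
    ¬ G.Adj x y := by
  intro hxy
  have := hM.2 _ (hM.1.insert hxy hx hy)
  rw [Finset.card_insert_of_notMem (mk_notMem_of_notMem_matchedVerts hx)] at this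
  omega

lemma not_adj_and_adj {a b x y : V} (hab : s(a, b) ∈ M) (hx : x ∉ matchedVerts M)
    (hy : y ∉ matchedVerts M) (hxy : x ≠ y) : ¬ (G.Adj x a ∧ G.Adj b y) := by
  rintro ⟨hxa, hby⟩
  have hsub : M.erase s(a, b) ⊆ M := Finset.erase_subset _ _
  have ha : a ∉ matchedVerts (M.erase s(a, b)) :=
    hM.1.notMem_matchedVerts_erase hab (Sym2.mem_mk_left a b)
  have hb : b ∉ matchedVerts (M.erase s(a, b)) :=
    hM.1.notMem_matchedVerts_erase hab (Sym2.mem_mk_right a b)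
  have haM : a ∈ matchedVerts M := mem_matchedVerts.2 ⟨_, hab, Sym2.mem_mk_left a b⟩
  have hbM : b ∈ matchedVerts M := mem_matchedVerts.2 ⟨_, hab, Sym2.mem_mk_right a b⟩
  have hM₂ := (hM.1.mono hsub).insert hby hb (fun h => hy (matchedVerts_mono hsub h))
  have hxM₂ : x ∉ matchedVerts (insert s(b, y) (M.erase s(a, b))) := by
    rw [mem_matchedVerts_insert]
    rintro (rfl | rfl | h)
    exacts [hx hbM, hxy rfl, hx (matchedVerts_mono hsub h)]
  have haM₂ : a ∉ matchedVerts (insert s(b, y) (M.erase s(a, b))) := by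
    rw [mem_matchedVerts_insert]
    rintro (h | rfl | h)
    exacts [(hM.1.1 hab).ne h, hy haM, ha h]
  have hcard := hM.2 _ (hM₂.insert hxa hxM₂ haM₂)
  rw [Finset.card_insert_of_notMem (mk_notMem_of_notMem_matchedVerts hxM₂),
    Finset.card_insert_of_notMem (mk_notMem_of_notMem_matchedVerts hb),
    Finset.card_erase_of_mem hab] at hcard
  have := Finset.card_pos.2 ⟨_, hab⟩
  omega

lemma swap {c d w : V} (hcd : s(c, d) ∈ M) (hw : w ∉ matchedVerts M) (hdw : G.Adj d w) :
    G.IsMaximumMatching (insert s(d, w) (M.erase s(c, d))) := by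
  have hsub : M.erase s(c, d) ⊆ M := Finset.erase_subset _ _
  have hd : d ∉ matchedVerts (M.erase s(c, d)) :=
    hM.1.notMem_matchedVerts_erase hcd (Sym2.mem_mk_right c d)
  refine ⟨(hM.1.mono hsub).insert hdw hd (fun h => hw (matchedVerts_mono hsub h)), ?_⟩
  rw [Finset.card_insert_of_notMem (mk_notMem_of_notMem_matchedVerts hd),
    Finset.card_erase_add_one hcd]
  exact hM.2

end IsMaximumMatching

end Matching

section Finite

variable {V : Type*} [Fintype V] [DecidableEq V] {G : SimpleGraph V} [DecidableRel G.Adj]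

lemma IsEdgeMatching.exists_card_eq_succ {M : Finset (Sym2 V)} (hM : G.IsEdgeMatching M)
    {v : V} (hv : v ∉ matchedVerts M) (hdeg : 2 * #M < G.degree v) :
    ∃ M', G.IsEdgeMatching M' ∧ #M' = #M + 1 := by
  obtain ⟨w, hw, hwM⟩ : ∃ w ∈ G.neighborFinset v, w ∉ matchedVerts M := by
    by_contra! h
    have := Finset.card_le_card h
    rw [hM.card_matchedVerts, card_neighborFinset_eq_degree] at this
    omega
  exact ⟨_, hM.insert ((mem_neighborFinset G v w).1 hw) hv hwM,
    Finset.card_insert_of_notMem (mk_notMem_of_notMem_matchedVerts hv)⟩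

variable (G) in
def unmatchedDegree (M : Finset (Sym2 V)) (v : V) : ℕ := #(G.neighborFinset v \ matchedVerts M)

section UnmatchedDegree

variable {M : Finset (Sym2 V)} {v : V}

lemma mem_neighborFinset_sdiff_matchedVerts {w : V} :
    w ∈ G.neighborFinset v \ matchedVerts M ↔ G.Adj v w ∧ w ∉ matchedVerts M := by
  rw [Finset.mem_sdiff, mem_neighborFinset]

lemma exists_unmatched_neighbor (h : G.unmatchedDegree M v ≠ 0) :
    ∃ w, G.Adj v w ∧ w ∉ matchedVerts M := by
  obtain ⟨w, hw⟩ := Finset.card_pos.1 (Nat.pos_of_ne_zero h)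
  exact ⟨w, mem_neighborFinset_sdiff_matchedVerts.1 hw⟩

lemma exists_unmatched_neighbor_ne (h : 2 ≤ G.unmatchedDegree M v) (w : V) :
    ∃ u, G.Adj v u ∧ u ∉ matchedVerts M ∧ u ≠ w := by
  obtain ⟨u, hu, huw⟩ := Finset.exists_mem_ne h w
  exact ⟨u, (mem_neighborFinset_sdiff_matchedVerts.1 hu).1,
    (mem_neighborFinset_sdiff_matchedVerts.1 hu).2, huw⟩

end UnmatchedDegree

namespace IsMaximumMatching

variable {M : Finset (Sym2 V)} (hM : G.IsMaximumMatching M)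
include hM

lemma unmatchedDegree_partner_eq_zero {a : V} (ha : a ∈ matchedVerts M)
    (h2 : 2 ≤ G.unmatchedDegree M a) : G.unmatchedDegree M (partner M a) = 0 := by
  by_contra h
  obtain ⟨w, hbw, hw⟩ := exists_unmatched_neighbor h
  obtain ⟨u, hau, hu, huw⟩ := exists_unmatched_neighbor_ne h2 w
  exact hM.not_adj_and_adj (mk_partner_mem ha) hu hw huw ⟨hau.symm, hbw⟩

/-- The augmenting path `w - partner x = x - p = partner p - u` of length five is excluded by
swapping `s(x, partner x)` for `s(partner x, w)`, which leaves a length-three one. -/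
lemma unmatchedDegree_partner_eq_zero_of_adj {p x : V} (hp : p ∈ matchedVerts M)
    (h2 : 2 ≤ G.unmatchedDegree M (partner M p)) (hx : x ∈ matchedVerts M) (hpx : G.Adj p x)
    (hxp : x ≠ partner M p) : G.unmatchedDegree M (partner M x) = 0 := by
  by_contra h
  obtain ⟨w, hdw, hw⟩ := exists_unmatched_neighbor h
  obtain ⟨u, hhu, hu, huw⟩ := exists_unmatched_neighbor_ne h2 w
  have hxd := mk_partner_mem hx
  have hph : s(p, partner M p) ∈ insert s(partner M x, w) (M.erase s(x, partner M x)) := by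
    refine Finset.mem_insert_of_mem (Finset.mem_erase.2 ⟨?_, mk_partner_mem hp⟩)
    rw [Ne, Sym2.eq_iff]
    rintro (⟨rfl, -⟩ | ⟨-, h⟩)
    exacts [hpx.ne rfl, hxp h.symm]
  have hxM' : x ∉ matchedVerts (insert s(partner M x, w) (M.erase s(x, partner M x))) := by
    rw [mem_matchedVerts_insert]
    rintro (h | rfl | h)
    · exact (hM.1.adj_partner hx).ne h
    · exact hw hx
    · exact hM.1.notMem_matchedVerts_erase hxd (Sym2.mem_mk_left _ _) h
  have huM' : u ∉ matchedVerts (insert s(partner M x, w) (M.erase s(x, partner M x))) := by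
    rw [mem_matchedVerts_insert]
    rintro (rfl | rfl | h)
    · exact hu (partner_mem_matchedVerts hx)
    · exact huw rfl
    · exact hu (matchedVerts_mono (Finset.erase_subset _ _) h)
  exact (hM.swap hxd hw hdw).not_adj_and_adj hph hxM' huM' (fun h => hu (h ▸ hx))
    ⟨hpx.symm, hhu⟩

end IsMaximumMatching

variable (G) in
def edgesBetween (A B : Finset V) : Finset (Sym2 V) :=
  A.biUnion fun a => (G.neighborFinset a ∩ B).image (s(a, ·))

lemma card_edgesBetween_le (A B : Finset V) :
    #(G.edgesBetween A B) ≤ ∑ a ∈ A, #(G.neighborFinset a ∩ B) :=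
  Finset.card_biUnion_le.trans (Finset.sum_le_sum fun _ _ => Finset.card_image_le)

lemma mk_mem_edgesBetween {A B : Finset V} {a b : V} (hab : G.Adj a b) (ha : a ∈ A)
    (hb : b ∈ B) : s(a, b) ∈ G.edgesBetween A B :=
  Finset.mem_biUnion.2 ⟨a, ha, Finset.mem_image.2
    ⟨b, Finset.mem_inter.2 ⟨(mem_neighborFinset G a b).2 hab, hb⟩, rfl⟩⟩

lemma card_edgeFinset_inter_sym2_le (s : Finset V) :
    #(G.edgeFinset ∩ s.sym2) ≤ (#s).choose 2 := by
  rw [← Sym2.card_image_offDiag]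
  refine Finset.card_le_card fun e he => ?_
  induction e using Sym2.ind with
  | h a b =>
    rw [Finset.mem_inter, mem_edgeFinset, mem_edgeSet, Finset.mk_mem_sym2_iff] at he
    exact Finset.mem_image.2 ⟨(a, b), Finset.mem_offDiag.2 ⟨he.2.1, he.2.2, he.1.ne⟩, rfl⟩

section Partition

variable (G) (M : Finset (Sym2 V))

noncomputable def heavyVerts : Finset V :=
  (matchedVerts M).filter fun v => 2 ≤ G.unmatchedDegree M v

noncomputable def heavyPartners : Finset V :=
  (matchedVerts M).filter fun v => 2 ≤ G.unmatchedDegree M (partner M v)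

noncomputable def lightVerts : Finset V :=
  (matchedVerts M).filter fun v =>
    G.unmatchedDegree M v ≤ 1 ∧ G.unmatchedDegree M (partner M v) ≤ 1

/-- The light vertices whose partner has no unmatched neighbour. -/
noncomputable def lightVerts₀ : Finset V :=
  (lightVerts G M).filter fun v => G.unmatchedDegree M (partner M v) = 0

variable {G M}

lemma heavyVerts_union_heavyPartners_union_lightVerts :
    heavyVerts G M ∪ heavyPartners G M ∪ lightVerts G M = matchedVerts M := by
  ext v
  simp only [heavyVerts, heavyPartners, lightVerts, Finset.mem_union, Finset.mem_filter]
  constructor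
  · rintro ((⟨h, -⟩ | ⟨h, -⟩) | ⟨h, -⟩) <;> exact h
  · intro h
    simp only [h, true_and]
    omega

lemma disjoint_heavyVerts_union_heavyPartners_lightVerts :
    Disjoint (heavyVerts G M ∪ heavyPartners G M) (lightVerts G M) := by
  simp only [Finset.disjoint_left, heavyVerts, heavyPartners, lightVerts, Finset.mem_union,
    Finset.mem_filter]
  omega

lemma sum_lightVerts_unmatchedDegree_le :
    ∑ v ∈ lightVerts G M, G.unmatchedDegree M v ≤
      #((lightVerts G M).filter fun v => G.unmatchedDegree M v ≠ 0) := by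
  rw [← Finset.sum_filter_ne_zero, Finset.card_eq_sum_ones]
  exact Finset.sum_le_sum fun v hv => ((Finset.mem_filter.1 (Finset.mem_filter.1 hv).1).2).1

variable (hM : G.IsMaximumMatching M)
include hM

lemma unmatchedDegree_eq_zero_of_mem_heavyPartners {v : V} (hv : v ∈ heavyPartners G M) :
    G.unmatchedDegree M v = 0 := by
  obtain ⟨hvM, h2⟩ := Finset.mem_filter.1 hv
  have := hM.unmatchedDegree_partner_eq_zero (partner_mem_matchedVerts hvM) h2
  rwa [hM.1.partner_partner hvM] at this

lemma disjoint_heavyVerts_heavyPartners : Disjoint (heavyVerts G M) (heavyPartners G M) := by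
  refine Finset.disjoint_left.2 fun v hH hP => ?_
  have := unmatchedDegree_eq_zero_of_mem_heavyPartners hM hP
  have := (Finset.mem_filter.1 hH).2
  omega

lemma card_heavyPartners : #(heavyPartners G M) = #(heavyVerts G M) := by
  have hpp : ∀ v ∈ matchedVerts M, partner M (partner M v) = v := fun v hv =>
    hM.1.partner_partner hv
  refine Finset.card_nbij' (partner M) (partner M) ?_ ?_ ?_ ?_
  · intro v hv
    obtain ⟨hvM, h2⟩ := Finset.mem_filter.1 hv
    exact Finset.mem_filter.2 ⟨partner_mem_matchedVerts hvM, h2⟩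
  · intro v hv
    obtain ⟨hvM, h2⟩ := Finset.mem_filter.1 hv
    exact Finset.mem_filter.2 ⟨partner_mem_matchedVerts hvM, by rwa [hpp v hvM]⟩
  · exact fun v hv => hpp v (Finset.mem_filter.1 hv).1
  · exact fun v hv => hpp v (Finset.mem_filter.1 hv).1

lemma two_mul_card_heavyVerts_add_card_lightVerts :
    2 * #(heavyVerts G M) + #(lightVerts G M) = 2 * #M := by
  rw [← hM.1.card_matchedVerts, ← heavyVerts_union_heavyPartners_union_lightVerts (G := G),
    Finset.card_union_of_disjoint disjoint_heavyVerts_union_heavyPartners_lightVerts,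
    Finset.card_union_of_disjoint (disjoint_heavyVerts_heavyPartners hM), card_heavyPartners hM]
  ring

lemma card_filter_unmatchedDegree_ne_zero_add_card_lightVerts₀ :
    #((lightVerts G M).filter fun v => G.unmatchedDegree M v ≠ 0) + #(lightVerts₀ G M) =
      #(lightVerts G M) := by
  have hpp : ∀ v ∈ lightVerts G M, partner M (partner M v) = v := fun v hv =>
    hM.1.partner_partner (Finset.mem_filter.1 hv).1
  have hmaps : ∀ v ∈ lightVerts G M, partner M v ∈ lightVerts G M := by
    intro v hv
    obtain ⟨hvM, h1, h2⟩ := Finset.mem_filter.1 hv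
    exact Finset.mem_filter.2 ⟨partner_mem_matchedVerts hvM, h2, by rwa [hpp v hv]⟩
  have hsplit := (lightVerts G M).card_filter_add_card_filter_not
    fun v => G.unmatchedDegree M (partner M v) = 0
  rw [lightVerts₀, ← hsplit, add_comm]
  congr 1
  refine Finset.card_nbij' (partner M) (partner M) ?_ ?_ ?_ ?_
  · intro v hv
    obtain ⟨hvL, h⟩ := Finset.mem_filter.1 hv
    exact Finset.mem_filter.2 ⟨hmaps v hvL, by rwa [hpp v hvL]⟩
  · intro v hv
    obtain ⟨hvL, h⟩ := Finset.mem_filter.1 hv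
    exact Finset.mem_filter.2 ⟨hmaps v hvL, h⟩
  · exact fun v hv => hpp v (Finset.mem_filter.1 hv).1
  · exact fun v hv => hpp v (Finset.mem_filter.1 hv).1

lemma mem_lightVerts₀_of_adj {p x : V} (hp : p ∈ heavyPartners G M) (hpx : G.Adj p x)
    (hx : x ∈ matchedVerts M) (hdx : G.unmatchedDegree M x ≤ 1) : x ∈ lightVerts₀ G M := by
  obtain ⟨hpM, h2⟩ := Finset.mem_filter.1 hp
  have hxp : x ≠ partner M p := by rintro rfl; omega
  have h0 := hM.unmatchedDegree_partner_eq_zero_of_adj hpM h2 hx hpx hxp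
  exact Finset.mem_filter.2 ⟨Finset.mem_filter.2 ⟨hx, hdx, by omega⟩, h0⟩

lemma edgeFinset_subset_union :
    G.edgeFinset ⊆ G.edgesBetween (matchedVerts M) (matchedVerts M)ᶜ ∪
      G.edgesBetween (heavyVerts G M) (matchedVerts M) ∪
      G.edgesBetween (heavyPartners G M) (lightVerts₀ G M) ∪
      G.edgeFinset ∩ (lightVerts G M).sym2 := by
  set U := G.edgesBetween (matchedVerts M) (matchedVerts M)ᶜ ∪
      G.edgesBetween (heavyVerts G M) (matchedVerts M) ∪
      G.edgesBetween (heavyPartners G M) (lightVerts₀ G M) ∪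
      G.edgeFinset ∩ (lightVerts G M).sym2
  have key : ∀ x y, G.Adj x y → y ∉ matchedVerts M ∨ x ∈ heavyVerts G M ∨
      (x ∈ heavyPartners G M ∧ y ∉ heavyVerts G M) → s(x, y) ∈ U := by
    intro x y hxy h
    simp only [U, Finset.mem_union]
    by_cases hy : y ∈ matchedVerts M
    · rcases h with h | h | ⟨hxP, hyH⟩
      · exact absurd hy h
      · exact Or.inl <| Or.inl <| Or.inr <| mk_mem_edgesBetween hxy h hy
      · refine Or.inl <| Or.inr <| mk_mem_edgesBetween hxy hxP ?_
        refine mem_lightVerts₀_of_adj hM hxP hxy hy ?_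
        simp only [heavyVerts, Finset.mem_filter, hy, true_and] at hyH
        omega
    · have hx : x ∈ matchedVerts M := by
        by_contra hx
        exact hM.not_adj hx hy hxy
      exact Or.inl <| Or.inl <| Or.inl <| mk_mem_edgesBetween hxy hx (Finset.mem_compl.2 hy)
  have hlight : ∀ v ∈ matchedVerts M, v ∉ heavyVerts G M → v ∉ heavyPartners G M →
      v ∈ lightVerts G M := by
    intro v hv hH hP
    rw [← heavyVerts_union_heavyPartners_union_lightVerts (G := G)] at hv
    simpa [hH, hP] using hv
  intro e he
  induction e using Sym2.ind with
  | h x y =>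
    have hxy : G.Adj x y := mem_edgeFinset.1 he
    by_cases h₁ : y ∉ matchedVerts M ∨ x ∈ heavyVerts G M ∨
        (x ∈ heavyPartners G M ∧ y ∉ heavyVerts G M)
    · exact key x y hxy h₁
    by_cases h₂ : x ∉ matchedVerts M ∨ y ∈ heavyVerts G M ∨
        (y ∈ heavyPartners G M ∧ x ∉ heavyVerts G M)
    · rw [Sym2.eq_swap]
      exact key y x hxy.symm h₂
    push Not at h₁ h₂
    refine Finset.mem_union_right _
      (Finset.mem_inter.2 ⟨he, Finset.mk_mem_sym2_iff.2 ⟨?_, ?_⟩⟩)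
    · exact hlight x h₂.1 h₁.2.1 fun hxP => h₂.2.1 (h₁.2.2 hxP)
    · exact hlight y h₁.1 h₂.2.1 fun hyP => h₁.2.1 (h₂.2.2 hyP)

lemma card_edgeFinset_le_of_isMaximumMatching {D : ℕ} (hdeg : ∀ v, G.degree v ≤ D) :
    #G.edgeFinset ≤ #(heavyVerts G M) * D +
      #((lightVerts G M).filter fun v => G.unmatchedDegree M v ≠ 0) +
      #(heavyVerts G M) * #(lightVerts₀ G M) + (#(lightVerts G M)).choose 2 := by
  have hunmatched : ∑ v ∈ matchedVerts M, #(G.neighborFinset v ∩ (matchedVerts M)ᶜ) ≤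
      ∑ v ∈ heavyVerts G M, G.unmatchedDegree M v +
        #((lightVerts G M).filter fun v => G.unmatchedDegree M v ≠ 0) := by
    simp_rw [← Finset.sdiff_eq_inter_compl]
    change ∑ v ∈ matchedVerts M, G.unmatchedDegree M v ≤ _
    rw [← heavyVerts_union_heavyPartners_union_lightVerts (G := G),
      Finset.sum_union disjoint_heavyVerts_union_heavyPartners_lightVerts,
      Finset.sum_union (disjoint_heavyVerts_heavyPartners hM),
      Finset.sum_eq_zero fun v hv => unmatchedDegree_eq_zero_of_mem_heavyPartners hM hv]
    have := sum_lightVerts_unmatchedDegree_le (G := G) (M := M)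
    omega
  have hheavy : ∑ v ∈ heavyVerts G M, G.unmatchedDegree M v +
      ∑ v ∈ heavyVerts G M, #(G.neighborFinset v ∩ matchedVerts M) ≤ #(heavyVerts G M) * D := by
    rw [← Finset.sum_add_distrib]
    refine (Finset.sum_le_card_nsmul _ _ D fun v _ => ?_).trans_eq (smul_eq_mul _ _)
    rw [unmatchedDegree, Finset.card_sdiff_add_card_inter, card_neighborFinset_eq_degree]
    exact hdeg v
  have hpartners : ∑ v ∈ heavyPartners G M, #(G.neighborFinset v ∩ lightVerts₀ G M) ≤
      #(heavyVerts G M) * #(lightVerts₀ G M) := by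
    rw [← card_heavyPartners hM, ← smul_eq_mul]
    exact Finset.sum_le_card_nsmul _ _ _ fun v _ => Finset.card_le_card Finset.inter_subset_right
  have h₁ := card_edgesBetween_le (G := G) (matchedVerts M) (matchedVerts M)ᶜ
  have h₂ := card_edgesBetween_le (G := G) (heavyVerts G M) (matchedVerts M)
  have h₃ := card_edgesBetween_le (G := G) (heavyPartners G M) (lightVerts₀ G M)
  have h₄ := card_edgeFinset_inter_sym2_le (G := G) (lightVerts G M)
  have hunion := (Finset.card_le_card (edgeFinset_subset_union hM)).trans <|
    (Finset.card_union_le _ _).trans <| Nat.add_le_add_right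
      ((Finset.card_union_le _ _).trans (Nat.add_le_add_right (Finset.card_union_le _ _) _)) _
  omega

end Partition

theorem card_edgeFinset_le_of_degree_le {K : ℕ} (hdeg : ∀ v, G.degree v ≤ 2 * K)
    (hK : ¬ HasMatchingOfSize G (K + 1)) : #G.edgeFinset ≤ K * (2 * K + 1) := by
  obtain ⟨M, hM⟩ := exists_isMaximumMatching (G := G)
  have hMK : #M < K + 1 := card_lt_of_not_hasMatchingOfSize hK hM.1
  have hcard := two_mul_card_heavyVerts_add_card_lightVerts hM
  exact (card_edgeFinset_le_of_isMaximumMatching hM hdeg).trans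
    (heavy_light_count_le (by omega)
      (card_filter_unmatchedDegree_ne_zero_add_card_lightVerts₀ hM))

end Finite

lemma IsEdgeMatching.image {V W : Type*} [DecidableEq W] {G : SimpleGraph V}
    {G' : SimpleGraph W} (f : G ↪g G') {M : Finset (Sym2 V)} (hM : G.IsEdgeMatching M) :
    G'.IsEdgeMatching (M.image (Sym2.map f)) := by
  refine ⟨fun e he => ?_, fun e he e' he' hne v hv => ?_⟩
  · obtain ⟨d, hd, rfl⟩ := Finset.mem_image.1 he
    exact (f.map_mem_edgeSet_iff).2 (hM.1 hd)
  · obtain ⟨d, hd, rfl⟩ := Finset.mem_image.1 he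
    obtain ⟨d', hd', rfl⟩ := Finset.mem_image.1 he'
    obtain ⟨⟨a, ha, rfl⟩, ⟨a', ha', haa'⟩⟩ := And.imp Sym2.mem_map.1 Sym2.mem_map.1 hv
    rw [f.injective haa'] at ha'
    exact hM.2 d hd d' hd' (fun h => hne (h ▸ rfl)) a ⟨ha, ha'⟩

section VertexDeletion

variable {N : ℕ} (G : SimpleGraph (Fin (N + 1))) [DecidableRel G.Adj] (v : Fin (N + 1))

def comapSuccAboveIsoInduce : G.comap v.succAbove ≃g G.induce {v}ᶜ where
  toEquiv := finSuccAboveEquiv v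
  map_rel_iff' := Iff.rfl

lemma card_edgeFinset_comap_succAbove_add_degree :
    #(G.comap v.succAbove).edgeFinset + G.degree v = #G.edgeFinset := by
  rw [(comapSuccAboveIsoInduce G v).card_edgeFinset_eq, card_edgeFinset_induce_compl_singleton,
    card_edgeFinset_deleteIncidenceSet]
  have := G.degree_le_card_edgeFinset v
  omega

variable {G v}

lemma not_hasMatchingOfSize_comap_succAbove {k : ℕ} (hdeg : 2 * k < G.degree v)
    (hG : ¬ HasMatchingOfSize G (k + 1)) : ¬ HasMatchingOfSize (G.comap v.succAbove) k := by
  rw [hasMatchingOfSize_iff]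
  rintro ⟨M, hM, rfl⟩
  have hM' : G.IsEdgeMatching (M.image (Sym2.map v.succAbove)) :=
    hM.image (Embedding.comap (Fin.succAboveEmb v) G)
  have hcard : #(M.image (Sym2.map v.succAbove)) = #M :=
    Finset.card_image_of_injective _ (Sym2.map.injective Fin.succAbove_right_injective)
  have hv : v ∉ matchedVerts (M.image (Sym2.map v.succAbove)) := by
    rw [mem_matchedVerts]
    rintro ⟨e', he', hve'⟩
    obtain ⟨e, -, rfl⟩ := Finset.mem_image.1 he'
    obtain ⟨a, -, ha⟩ := Sym2.mem_map.1 hve'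
    exact Fin.succAbove_ne v a ha
  obtain ⟨M', hM'', hcard'⟩ := hM'.exists_card_eq_succ hv (hcard ▸ hdeg)
  exact hG (hasMatchingOfSize_iff.2 ⟨M', hM'', by rw [hcard', hcard]⟩)

end VertexDeletion

end SimpleGraph

lemma Snk_adj {n k : ℕ} {i j : Fin n} :
    (Snk n k).Adj i j ↔ i ≠ j ∧ ((i : ℕ) < k ∨ (j : ℕ) < k) := Iff.rfl

lemma Snk_zero (n : ℕ) : Snk n 0 = ⊥ := by
  ext i j
  simp [Snk_adj]

lemma comap_succ_Snk (N j : ℕ) : (Snk (N + 1) (j + 1)).comap Fin.succ = Snk N j := by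
  ext a b
  simp only [comap_adj, Snk_adj, Fin.val_succ, ne_eq, Fin.succ_inj]
  omega

lemma isUniversal_Snk_zero (N j : ℕ) : (Snk (N + 1) (j + 1)).IsUniversal 0 :=
  fun _ hw => ⟨hw, Or.inl (Nat.succ_pos j)⟩

lemma card_edgeFinset_Snk_succ (N j : ℕ) :
    #(Snk (N + 1) (j + 1)).edgeFinset = #(Snk N j).edgeFinset + N := by
  rw [← card_edgeFinset_comap_succAbove_add_degree _ 0,
    (degree_eq_card_sub_one _ _).2 (isUniversal_Snk_zero N j), Fintype.card_fin,
    Nat.add_sub_cancel]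
  congr 1
  convert rfl using 3
  rw [Fin.succAbove_zero, comap_succ_Snk]

lemma card_edgeFinset_Snk {n j : ℕ} (hj : j ≤ n) :
    #(Snk n j).edgeFinset = j.choose 2 + j * (n - j) := by
  induction j generalizing n with
  | zero =>
    simp only [Nat.choose_zero_succ, zero_mul, add_zero, Finset.card_eq_zero,
      edgeFinset_eq_empty]
    exact Snk_zero n
  | succ j ih =>
    obtain ⟨N, rfl⟩ : ∃ N, n = N + 1 := ⟨n - 1, by omega⟩
    rw [card_edgeFinset_Snk_succ, ih (by omega), Nat.choose_succ_succ', Nat.choose_one_right]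
    obtain ⟨a, rfl⟩ : ∃ a, N = j + a := ⟨N - j, by omega⟩
    rw [show j + a + 1 - (j + 1) = a by omega, Nat.add_sub_cancel_left]
    ring

lemma lt_card_edgeFinset_Snk {n j : ℕ} (hj : 1 ≤ j) (hn : 5 * j + 5 ≤ 2 * n) :
    j * (2 * j + 1) < #(Snk n j).edgeFinset := by
  rw [card_edgeFinset_Snk (by omega)]
  obtain ⟨a, rfl⟩ : ∃ a, n = j + a := ⟨n - j, by omega⟩
  rw [Nat.add_sub_cancel_left]
  have := Nat.two_mul_choose_two_add_self j
  nlinarith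

lemma nonempty_iso_Snk_succ {N j : ℕ} {G : SimpleGraph (Fin (N + 1))} {v : Fin (N + 1)}
    (hv : G.IsUniversal v) (φ : G.comap v.succAbove ≃g Snk N j) :
    Nonempty (G ≃g Snk (N + 1) (j + 1)) := by
  have hadj : ∀ a, G.Adj v (v.succAbove a) := fun a => hv (Fin.succAbove_ne v a).symm
  have hφ : ∀ a b, G.Adj (v.succAbove a) (v.succAbove b) ↔ (Snk N j).Adj (φ a) (φ b) :=
    fun a b => φ.map_adj_iff.symm
  refine ⟨⟨(finSuccEquiv' v).trans ((Equiv.optionCongr φ.toEquiv).trans (finSuccEquiv N).symm),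
    fun {a b} => ?_⟩⟩
  cases a using Fin.succAboveCases v <;> cases b using Fin.succAboveCases v <;>
    simp [finSuccEquiv'_at, finSuccEquiv'_succAbove, Snk_adj, hadj, (hadj _).symm, hφ,
      (Fin.succ_ne_zero _).symm]

theorem card_edgeFinset_le_Snk (j : ℕ) {n : ℕ} (G : SimpleGraph (Fin n)) [DecidableRel G.Adj]
    (hn : 5 * (j + 1) ≤ 2 * n) (hG : ¬ HasMatchingOfSize G (j + 1)) :
    #G.edgeFinset ≤ #(Snk n j).edgeFinset ∧
      (#G.edgeFinset = #(Snk n j).edgeFinset → Nonempty (G ≃g Snk n j)) := by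
  induction j generalizing n with
  | zero =>
    have hbot := eq_bot_of_not_hasMatchingOfSize_one hG
    exact ⟨by simp [edgeFinset_eq_empty.2 hbot],
      fun _ => (hbot.trans (Snk_zero n).symm) ▸ ⟨Iso.refl⟩⟩
  | succ j ih =>
    by_cases hdeg : ∃ v, 2 * (j + 1) < G.degree v
    · obtain ⟨v, hv⟩ := hdeg
      obtain ⟨N, rfl⟩ : ∃ N, n = N + 1 := ⟨n - 1, by have := v.pos; omega⟩
      obtain ⟨hle, heq⟩ := ih (G.comap v.succAbove) (by omega)
        (not_hasMatchingOfSize_comap_succAbove hv hG)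
      have hdel := card_edgeFinset_comap_succAbove_add_degree G v
      have hvN : G.degree v ≤ N := by simpa using G.degree_lt_card_verts v
      rw [card_edgeFinset_Snk_succ]
      refine ⟨by omega, fun h => ?_⟩
      obtain ⟨φ⟩ := heq (by omega)
      have huniv : G.IsUniversal v :=
        (degree_eq_card_sub_one G v).1 (by rw [Fintype.card_fin]; omega)
      exact nonempty_iso_Snk_succ huniv φ
    · push Not at hdeg
      have hlt := lt_card_edgeFinset_Snk (j := j + 1) (n := n) (by omega) (by omega)
      have hle := card_edgeFinset_le_of_degree_le hdeg hG
      exact ⟨by omega, fun h => by omega⟩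

theorem stmt_2 (k n : ℕ) (hk : 1 ≤ k) (hn : 5 * k ≤ 2 * n)
    (G : SimpleGraph (Fin n)) [DecidableRel G.Adj]
    (hM : ¬ HasMatchingOfSize G k) :
    G.edgeFinset.card ≤ (Snk n (k - 1)).edgeFinset.card ∧
      (G.edgeFinset.card = (Snk n (k - 1)).edgeFinset.card ↔
        Nonempty (G ≃g Snk n (k - 1))) := by
  obtain ⟨j, rfl⟩ : ∃ j, k = j + 1 := ⟨k - 1, by omega⟩
  obtain ⟨hle, heq⟩ := card_edgeFinset_le_Snk j G hn hM
  exact ⟨hle, heq, fun ⟨φ⟩ => φ.card_edgeFinset_eq⟩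
end

section
/- Let n ≥ 2k+2 and let G be a simple graph of order n containing S_{n,k} as a spanning subgraph. If G ≠ S_{n,k}, then G contains every tree of order 2k+2 as a subgraph. -/
open SimpleGraph

/-!
A tree `T` on `2k+2` vertices is bipartite. If one colour class has at most `k` vertices, it is a
vertex cover of size at most `k`: send it into the `k` universal vertices of `S_{n,k}` and the
independent rest anywhere else. Otherwise both classes have `k+1` vertices; pick a leaf `a` with
neighbour `b`. The class of `a` minus `a` has `k` vertices and covers every edge except `ab`, so
the same recipe works once `ab` is sent onto an edge `uv` of `G` between non-universal vertices,
which exists because `G ≠ S_{n,k}`.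
-/

open Finset

variable {α β : Type*}

theorem Function.Embedding.exists_apply_eq_apply_eq (e : α ↪ β) {x₁ x₂ : α} (hx : x₁ ≠ x₂)
    {y₁ y₂ : β} (hy : y₁ ≠ y₂) : ∃ e' : α ↪ β, e' x₁ = y₁ ∧ e' x₂ = y₂ := by
  classical
  set σ₁ := Equiv.swap (e x₁) y₁
  set σ₂ := Equiv.swap (σ₁ (e x₂)) y₂
  have h : σ₁ (e x₂) ≠ y₁ := by
    rw [← Equiv.swap_apply_left (e x₁) y₁]
    exact σ₁.injective.ne (e.injective.ne hx.symm)
  refine ⟨e.trans (σ₁.trans σ₂).toEmbedding, ?_, by simp [σ₂]⟩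
  simp [σ₁, σ₂, Equiv.swap_apply_of_ne_of_ne h.symm hy]

namespace SimpleGraph

variable {T : SimpleGraph α}

theorem isContained_of_universal {G : SimpleGraph β} (p : α → Prop) (q : β → Prop)
    (hq : ∀ ⦃y z⦄, q y → y ≠ z → G.Adj y z) (e₁ : {x // p x} ↪ {y // q y})
    (e₂ : {x // ¬p x} ↪ {y // ¬q y})
    (he₂ : ∀ x y : {x // ¬p x}, T.Adj x y → G.Adj (e₂ x) (e₂ y)) : T ⊑ G := by
  classical
  let f : α ↪ β := (Equiv.sumCompl p).symm.toEmbedding.trans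
    ((e₁.sumMap e₂).trans (Equiv.sumCompl q).toEmbedding)
  have hf₁ : ∀ x (hx : p x), f x = e₁ ⟨x, hx⟩ := by
    intro x hx; simp [f, Equiv.sumCompl_symm_apply_of_pos hx]
  have hf₂ : ∀ x (hx : ¬p x), f x = e₂ ⟨x, hx⟩ := by
    intro x hx; simp [f, Equiv.sumCompl_symm_apply_of_neg hx]
  have hp : ∀ x y, T.Adj x y → p x → G.Adj (f x) (f y) := fun x y h hx =>
    hq (by rw [hf₁ x hx]; exact (e₁ _).2) (f.injective.ne h.ne)
  refine ⟨⟨⟨f, fun {x y} h => ?_⟩, f.injective⟩⟩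
  by_cases hx : p x
  · exact hp x y h hx
  by_cases hy : p y
  · exact (hp y x h.symm hy).symm
  rw [hf₂ x hx, hf₂ y hy]
  exact he₂ ⟨x, hx⟩ ⟨y, hy⟩ h

theorem Coloring.isVertexCover_deleteEdges_erase [Fintype α] [DecidableEq α]
    (c : T.Coloring (Fin 2)) {a b : α} (hleaf : ∀ y, T.Adj a y → y = b) :
    (T.deleteEdges {s(a, b)}).IsVertexCover ↑((univ.filter (c · = c a)).erase a) := by
  intro x y hxy
  rw [deleteEdges_adj, Set.mem_singleton_iff] at hxy
  obtain ⟨hxy, hne⟩ := hxy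
  have hx : x ≠ a := by rintro rfl; exact hne (by rw [hleaf y hxy])
  have hy : y ≠ a := by rintro rfl; exact hne (by rw [hleaf x hxy.symm, Sym2.eq_swap])
  have two_colours : ∀ i j l : Fin 2, i ≠ j → i = l ∨ j = l := by decide
  simpa [hx, hy] using two_colours _ _ (c a) (c.valid hxy)

variable [Fintype α] {n k : ℕ} {G : SimpleGraph (Fin n)}

theorem exists_adj_of_snk_lt (hlt : Snk n k < G) :
    ∃ u v : Fin n, G.Adj u v ∧ k ≤ (u : ℕ) ∧ k ≤ (v : ℕ) := by
  by_contra! h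
  refine hlt.not_ge fun u v huv => ⟨huv.ne, ?_⟩
  by_contra! h'
  exact (h u v huv h'.1).not_ge h'.2

theorem nonempty_embedding_compl (hα : Fintype.card α ≤ n) (C : Finset α) :
    Nonempty ({x // x ∉ C} ↪ {i : Fin n // ¬(i : ℕ) < #C}) := by
  classical
  refine Function.Embedding.nonempty_of_card_le ?_
  rw [Fintype.card_subtype_compl, Fintype.card_subtype_compl, Fintype.card_coe,
    Fintype.card_fin_lt_of_le ((card_le_univ C).trans hα), Fintype.card_fin]
  omega

theorem isContained_of_snk_le (hsub : Snk n k ≤ G) (hα : Fintype.card α ≤ n) (C : Finset α)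
    (hC : #C ≤ k) (e : {x // x ∉ C} ↪ {i : Fin n // ¬(i : ℕ) < #C})
    (he : ∀ x y : {x // x ∉ C}, T.Adj x y → G.Adj (e x) (e y)) : T ⊑ G := by
  classical
  have hCn : #C ≤ n := (card_le_univ C).trans hα
  refine isContained_of_universal (· ∈ C) (fun i : Fin n => (i : ℕ) < #C)
    (fun y z hy hyz => hsub ⟨hyz, Or.inl (hy.trans_le hC)⟩) ?_ e he
  exact (Fintype.equivOfCardEq <| by
    rw [Fintype.card_coe, Fintype.card_fin_lt_of_le hCn]).toEmbedding

theorem isContained_of_isVertexCover (hsub : Snk n k ≤ G) (hα : Fintype.card α ≤ n)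
    (C : Finset α) (hC : #C ≤ k) (hcover : T.IsVertexCover C) : T ⊑ G := by
  obtain ⟨e⟩ := nonempty_embedding_compl hα C
  refine isContained_of_snk_le hsub hα C hC e fun x y h => ?_
  simpa [x.2, y.2] using hcover h

theorem isContained_of_isVertexCover_deleteEdges (hsub : Snk n k ≤ G)
    (hα : Fintype.card α ≤ n) (C : Finset α) (hC : #C ≤ k) {a b : α} (hab : a ≠ b)
    (ha : a ∉ C) (hb : b ∉ C) (hcover : (T.deleteEdges {s(a, b)}).IsVertexCover C)
    {u v : Fin n} (huv : G.Adj u v) (hu : k ≤ (u : ℕ)) (hv : k ≤ (v : ℕ)) : T ⊑ G := by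
  obtain ⟨e₀⟩ := nonempty_embedding_compl hα C
  obtain ⟨e, hea, heb⟩ := e₀.exists_apply_eq_apply_eq (x₁ := ⟨a, ha⟩) (x₂ := ⟨b, hb⟩)
    (by simpa using hab) (y₁ := ⟨u, by omega⟩) (y₂ := ⟨v, by omega⟩) (by simpa using huv.ne)
  refine isContained_of_snk_le hsub hα C hC e fun x y h => ?_
  have hxy : s(x.1, y.1) = s(a, b) := by
    by_contra hne
    simpa [x.2, y.2] using hcover (deleteEdges_adj.2 ⟨h, hne⟩)
  rcases Sym2.eq_iff.1 hxy with ⟨hx, hy⟩ | ⟨hx, hy⟩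
  · rw [show x = ⟨a, ha⟩ from Subtype.ext hx, show y = ⟨b, hb⟩ from Subtype.ext hy, hea, heb]
    exact huv
  · rw [show x = ⟨b, hb⟩ from Subtype.ext hx, show y = ⟨a, ha⟩ from Subtype.ext hy, hea, heb]
    exact huv.symm

end SimpleGraph

theorem stmt_4 (k n : ℕ) (hn : 2 * k + 2 ≤ n)
    (G : SimpleGraph (Fin n)) (hsub : Snk n k ≤ G) (hne : G ≠ Snk n k) :
    ∀ T : SimpleGraph (Fin (2 * k + 2)), T.IsTree →
      ∃ f : Fin (2 * k + 2) → Fin n, Function.Injective f ∧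
        ∀ a b, T.Adj a b → G.Adj (f a) (f b) := by
  classical
  intro T hT
  suffices T ⊑ G by
    obtain ⟨f⟩ := this
    exact ⟨f, f.injective, fun _ _ h => f.toHom.map_adj h⟩
  obtain ⟨u, v, huv, hu, hv⟩ := exists_adj_of_snk_lt (lt_of_le_of_ne hsub hne.symm)
  obtain ⟨c⟩ := hT.colorable_two
  obtain ⟨a, ha⟩ := hT.exists_vert_degree_one_of_nontrivial
  obtain ⟨b, hab, hleaf⟩ := degree_eq_one_iff_existsUnique_adj.1 ha
  have hα : Fintype.card (Fin (2 * k + 2)) ≤ n := by simpa using hn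
  set A := univ.filter (c · = c a)
  by_cases hA : #A ≤ k + 1
  · refine isContained_of_isVertexCover_deleteEdges hsub hα (A.erase a) ?_ hab.ne (by simp)
      (by simp [A, (c.valid hab).symm]) (c.isVertexCover_deleteEdges_erase hleaf) huv hu hv
    rw [card_erase_of_mem (by simp [A])]
    omega
  · refine isContained_of_isVertexCover hsub hα Aᶜ ?_ ?_
    · rw [card_compl, Fintype.card_fin]
      omega
    · have hAcoe : (A : Set _) = c.colorClass (c a) := by ext; simp [A, Coloring.colorClass]
      rw [coe_compl, isVertexCover_compl, hAcoe]
      exact c.isIndepSet_colorClass (c a)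
end

section
/- Let n ≥ 2k+2, and let S⁺_{2k+2,k} be the graph obtained from S_{2k+2,k} by adding one edge inside the independent set. Then S⁺_{2k+2,k} contains every tree of order 2k+2 as a subgraph. -/
/-!
A tree is bipartite. If one colour class has at least `k + 2` vertices, the other class has at
most `k` vertices and meets every edge, so it can be sent into the clique `K_k`. Otherwise let `p`
be the neighbour of a leaf `ℓ`: the class of `ℓ` has at most `k + 1` vertices, and without `ℓ` it
meets every edge except `ℓp`, which is sent onto the extra edge of `S⁺_{2k+2,k}`.
-/

open SimpleGraph

/-- `S⁺_{2k+2,k}`: the join of `K_k` (the first `k` vertices) with an independent set of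
`k + 2` vertices, plus one extra edge (between vertices `k` and `k+1`) inside the
independent part. -/
def SnkPlus (k : ℕ) : SimpleGraph (Fin (2 * k + 2)) :=
  SimpleGraph.fromRel (fun i j => (i : ℕ) < k ∨ ((i : ℕ) = k ∧ (j : ℕ) = k + 1))

open Finset

lemma snkPlus_adj_of_val_lt {k : ℕ} {i j : Fin (2 * k + 2)} (hi : (i : ℕ) < k) (hij : i ≠ j) :
    (SnkPlus k).Adj i j := by
  simp [SnkPlus, hij, hi]

lemma snkPlus_adj_of_val_eq_of_val_eq_succ {k : ℕ} {i j : Fin (2 * k + 2)} (hi : (i : ℕ) = k)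
    (hj : (j : ℕ) = k + 1) : (SnkPlus k).Adj i j := by
  simp [SnkPlus, hi, hj, Fin.ext_iff]

theorem exists_equiv_fin_of_card_le {V : Type*} [Fintype V] {n k : ℕ}
    (hV : Fintype.card V = n) (hkn : k + 2 ≤ n) {C : Finset V} (hC : #C ≤ k) {u v : V}
    (huv : u ≠ v) (hu : u ∉ C) (hv : v ∉ C) :
    ∃ g : V ≃ Fin n, (∀ x ∈ C, (g x : ℕ) < k) ∧ (g u : ℕ) = k ∧ (g v : ℕ) = k + 1 := by
  classical
  let f : V → Fin n := fun x =>
    if h : x ∈ C then ⟨C.equivFin ⟨x, h⟩, by omega⟩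
    else if x = u then ⟨k, by omega⟩ else ⟨k + 1, by omega⟩
  have hfC : ∀ x (h : x ∈ C), f x = ⟨C.equivFin ⟨x, h⟩, by omega⟩ := fun x h => dif_pos h
  have hfu : f u = ⟨k, by omega⟩ := by simp [f, hu]
  have hfv : f v = ⟨k + 1, by omega⟩ := by simp [f, hv, huv.symm]
  have hlt : ∀ x ∈ C, (f x : ℕ) < k := fun x hx => by
    rw [hfC x hx]; exact (C.equivFin ⟨x, hx⟩).isLt.trans_le hC
  have hf : Set.InjOn f (↑C ∪ {u, v}) := by
    rintro x (hx | rfl | rfl) y (hy | rfl | rfl) hxy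
    · rw [hfC x hx, hfC y hy, Fin.mk.injEq, Fin.val_inj, EmbeddingLike.apply_eq_iff_eq] at hxy
      exact congrArg Subtype.val hxy
    all_goals first
      | rfl
      | (have := congrArg Fin.val hxy; simp only [hfu, hfv] at this
         first | omega | (have := hlt _ ‹_›; omega))
  obtain ⟨g, hg⟩ := Set.MapsTo.exists_equiv_extend_of_card_eq (t := univ)
    (by simp [hV]) (by simp [Set.MapsTo]) hf
  refine ⟨g.trans (Equiv.subtypeUnivEquiv mem_univ), fun x hx => ?_, ?_, ?_⟩
  · simpa [hg x (by simp [hx])] using hlt x hx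
  · simp [hg u (by simp), hfu]
  · simp [hg v (by simp), hfv]

theorem exists_injective_hom_snkPlus_of_cover {V : Type*} [Fintype V] {k : ℕ}
    (hV : Fintype.card V = 2 * k + 2) {G : SimpleGraph V} {C : Finset V} (hC : #C ≤ k)
    {u v : V} (huv : u ≠ v) (hu : u ∉ C) (hv : v ∉ C)
    (hcover : ∀ a b, G.Adj a b → a ∈ C ∨ b ∈ C ∨ s(a, b) = s(u, v)) :
    ∃ f : V → Fin (2 * k + 2), Function.Injective f ∧
      ∀ a b, G.Adj a b → (SnkPlus k).Adj (f a) (f b) := by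
  obtain ⟨g, hgC, hgu, hgv⟩ := exists_equiv_fin_of_card_le hV (by omega) hC huv hu hv
  refine ⟨g, g.injective, fun a b hab => ?_⟩
  have hne : g a ≠ g b := g.injective.ne hab.ne
  rcases hcover a b hab with ha | hb | hab'
  · exact snkPlus_adj_of_val_lt (hgC a ha) hne
  · exact (snkPlus_adj_of_val_lt (hgC b hb) hne.symm).symm
  · rcases Sym2.eq_iff.1 hab' with ⟨rfl, rfl⟩ | ⟨rfl, rfl⟩
    · exact snkPlus_adj_of_val_eq_of_val_eq_succ hgu hgv
    · exact (snkPlus_adj_of_val_eq_of_val_eq_succ hgu hgv).symm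

section IndepSet

variable {V : Type*} [Fintype V] [DecidableEq V] {k : ℕ} {G : SimpleGraph V} {I : Finset V}

theorem exists_injective_hom_snkPlus_of_isIndepSet (hV : Fintype.card V = 2 * k + 2)
    (hI : G.IsIndepSet I) (hcard : k + 2 ≤ #I) :
    ∃ f : V → Fin (2 * k + 2), Function.Injective f ∧
      ∀ a b, G.Adj a b → (SnkPlus k).Adj (f a) (f b) := by
  obtain ⟨u, hu, v, hv, huv⟩ := Finset.one_lt_card.1 (by omega : 1 < #I)
  refine exists_injective_hom_snkPlus_of_cover hV (C := Iᶜ) ?_ huv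
    (by simpa using hu) (by simpa using hv) fun a b hab => ?_
  · rw [card_compl]; omega
  · by_contra! h
    simp only [mem_compl, not_not] at h
    exact hI h.1 h.2.1 hab.ne hab

theorem exists_injective_hom_snkPlus_of_leaf (hV : Fintype.card V = 2 * k + 2)
    (hI : G.IsIndepSet I) (hcard : #Iᶜ ≤ k + 1) {ℓ p : V} (hp : p ∈ I) (hℓp : G.Adj ℓ p)
    (hleaf : ∀ b, G.Adj ℓ b → b = p) :
    ∃ f : V → Fin (2 * k + 2), Function.Injective f ∧
      ∀ a b, G.Adj a b → (SnkPlus k).Adj (f a) (f b) := by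
  have hℓ : ℓ ∈ Iᶜ := mem_compl.2 fun hℓ => hI hℓ hp hℓp.ne hℓp
  refine exists_injective_hom_snkPlus_of_cover hV (C := Iᶜ.erase ℓ) ?_ hℓp.ne
    (notMem_erase ℓ _) (fun h => (mem_compl.1 (mem_of_mem_erase h)) hp) fun a b hab => ?_
  · rw [card_erase_of_mem hℓ]; omega
  · have hab' : a ∉ I ∨ b ∉ I := by
      by_contra! h
      exact hI h.1 h.2 hab.ne hab
    by_cases haℓ : a = ℓ
    · subst haℓ; simp [hleaf b hab]
    by_cases hbℓ : b = ℓ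
    · subst hbℓ; simp [hleaf a hab.symm, Sym2.eq_swap]
    simp only [mem_erase, mem_compl]
    tauto

end IndepSet

theorem stmt_5 (k : ℕ) :
    ∀ T : SimpleGraph (Fin (2 * k + 2)), T.IsTree →
      ∃ f : Fin (2 * k + 2) → Fin (2 * k + 2), Function.Injective f ∧
        ∀ a b, T.Adj a b → (SnkPlus k).Adj (f a) (f b) := by
  intro T hT
  classical
  obtain ⟨ℓ, hℓ⟩ := hT.exists_vert_degree_one_of_nontrivial
  obtain ⟨p, hℓp, hleaf⟩ := degree_eq_one_iff_existsUnique_adj.1 hℓ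
  let c := hT.coloringTwo
  have hclass : ∀ i, T.IsIndepSet ↑({x | c x = i} : Finset _) := fun i => by
    simpa [Coloring.colorClass] using c.isIndepSet_colorClass i
  by_cases hcard : #({x | c x = c p} : Finset _)ᶜ ≤ k + 1
  · exact exists_injective_hom_snkPlus_of_leaf (by simp) (hclass _) hcard (by simp) hℓp hleaf
  · refine exists_injective_hom_snkPlus_of_isIndepSet (by simp) (hclass (c ℓ)) ?_
    have hcompl :
        ({x | c x = c p} : Finset (Fin (2 * k + 2)))ᶜ = ({x | c x = c ℓ} : Finset _) := by
      ext x
      have := c.valid hℓp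
      simp only [mem_compl, mem_filter, mem_univ, true_and]
      omega
    rw [hcompl] at hcard
    omega
end

section
/- Let G be a graph, u a vertex of G, and let L be the graph on vertex set N¹(u) ∪ N²(u) whose edges are the edges of G inside N¹(u) together with the edges of G between N¹(u) and N²(u). Let f(x) = x² - (k-1)x - k(n-k), B = f(A(G)), and B_u the column sum of B at u, where n = |V(G)|. Then B_u = Σ_{x ∈ N¹(u)} d_L(x) - (k-2)·d_G(u) - k(n-k). -/
open SimpleGraph Finset
open scoped Classical

noncomputable section

/-- The set of vertices at distance exactly `i` from `u` in `G`. -/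
def distSet {n : ℕ} (G : SimpleGraph (Fin n)) (u : Fin n) (i : ℕ) : Finset (Fin n) :=
  Finset.univ.filter (fun y => G.dist u y = i)

/-- The graph `L` on `N¹(u) ∪ N²(u)` whose edges are the edges of `G` inside `N¹(u)`
together with the edges of `G` between `N¹(u)` and `N²(u)` (as a graph on all of `Fin n`;
vertices outside `N¹(u) ∪ N²(u)` are isolated). -/
def Lgraph {n : ℕ} (G : SimpleGraph (Fin n)) (u : Fin n) : SimpleGraph (Fin n) where
  Adj x y := G.Adj x y ∧
    ((x ∈ distSet G u 1 ∧ y ∈ distSet G u 1) ∨ (x ∈ distSet G u 1 ∧ y ∈ distSet G u 2) ∨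
      (x ∈ distSet G u 2 ∧ y ∈ distSet G u 1))
  symm := by
    constructor
    intro x y ⟨h1, h2⟩
    exact ⟨h1.symm, by tauto⟩
  loopless := by constructor; intro x ⟨h1, _⟩; exact G.irrefl h1

/-! Column sums of `A` are degrees, so the column sum of `A²` at `u` is `Σ_{x ∈ N(u)} d_G(x)`.
A neighbour `x` of `u` has all its `G`-neighbours other than `u` in `N¹(u) ∪ N²(u)`, hence
`d_L(x) = d_G(x) - 1`, and summing over `N(u)` turns `Σ d_G(x)` into `Σ d_L(x) + d_G(u)`. -/

namespace SimpleGraph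

variable {V α : Type*} [Fintype V] (G : SimpleGraph V) [DecidableRel G.Adj]

theorem sum_adjMatrix_apply [NonAssocSemiring α] (w : V) :
    ∑ v, G.adjMatrix α v w = G.degree w := by
  rw [← card_neighborFinset_eq_degree]
  simp [adjMatrix_apply, neighborFinset_eq_filter, sum_boole, adj_comm]

theorem sum_adjMatrix_mul_self_apply [NonAssocSemiring α] (w : V) :
    ∑ v, (G.adjMatrix α * G.adjMatrix α) v w = ∑ x ∈ G.neighborFinset w, (G.degree x : α) := by
  simp only [mul_adjMatrix_apply]
  exact Finset.sum_comm.trans (Finset.sum_congr rfl fun x _ => G.sum_adjMatrix_apply x)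

end SimpleGraph

section Lgraph

variable {n : ℕ} (G : SimpleGraph (Fin n)) (u : Fin n)

theorem distSet_one : distSet G u 1 = G.neighborFinset u := by
  ext y
  simp [distSet, dist_eq_one_iff_adj]

theorem Lgraph_neighborFinset_of_adj {x : Fin n} (hx : G.Adj u x) :
    (Lgraph G u).neighborFinset x = G.neighborFinset x \ {u} := by
  ext y
  have hx1 : G.dist u x = 1 := dist_eq_one_iff_adj.mpr hx
  simp only [mem_neighborFinset]
  simp only [mem_neighborFinset, mem_sdiff, mem_singleton, Lgraph, distSet, mem_filter, mem_univ,
    true_and, hx1]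
  constructor
  · rintro ⟨hxy, h⟩
    refine ⟨hxy, ?_⟩
    rintro rfl
    simp at h
  · rintro ⟨hxy, hyu⟩
    have hle : G.dist u y ≤ 2 := by simpa using dist_le (.cons hx hxy.toWalk)
    have hpos : 0 < G.dist u y := Reachable.pos_dist_of_ne ⟨.cons hx hxy.toWalk⟩ (Ne.symm hyu)
    refine ⟨hxy, ?_⟩
    omega

theorem Lgraph_degree_add_one_of_adj {x : Fin n} (hx : G.Adj u x) :
    (Lgraph G u).degree x + 1 = G.degree x := by
  have hu : u ∈ G.neighborFinset x := (mem_neighborFinset _ _ _).mpr hx.symm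
  rw [← card_neighborFinset_eq_degree, Lgraph_neighborFinset_of_adj G u hx,
    card_sdiff_of_subset (singleton_subset_iff.mpr hu), card_singleton,
    ← card_neighborFinset_eq_degree]
  exact Nat.sub_add_cancel (card_pos.mpr ⟨u, hu⟩)

theorem sum_degree_neighborFinset_eq_sum_Lgraph_degree :
    ∑ x ∈ G.neighborFinset u, G.degree x =
      ∑ x ∈ distSet G u 1, (Lgraph G u).degree x + G.degree u := by
  rw [distSet_one, ← card_neighborFinset_eq_degree G u, card_eq_sum_ones, ← sum_add_distrib]
  exact sum_congr rfl fun x hx =>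
    (Lgraph_degree_add_one_of_adj G u ((mem_neighborFinset _ _ _).mp hx)).symm

end Lgraph

theorem stmt_10 (n k : ℕ) (G : SimpleGraph (Fin n)) (u : Fin n)
    (B : Matrix (Fin n) (Fin n) ℝ)
    (hB : B = G.adjMatrix ℝ * G.adjMatrix ℝ - ((k : ℝ) - 1) • G.adjMatrix ℝ -
      ((k : ℝ) * ((n : ℝ) - k)) • (1 : Matrix (Fin n) (Fin n) ℝ)) :
    ∑ i, B i u = (∑ x ∈ distSet G u 1, ((Lgraph G u).degree x : ℝ)) -
      ((k : ℝ) - 2) * (G.degree u : ℝ) - (k : ℝ) * ((n : ℝ) - k) := by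
  have hdeg : ∑ x ∈ G.neighborFinset u, (G.degree x : ℝ) =
      ∑ x ∈ distSet G u 1, ((Lgraph G u).degree x : ℝ) + G.degree u := by
    exact_mod_cast sum_degree_neighborFinset_eq_sum_Lgraph_degree G u
  subst hB
  simp only [Matrix.sub_apply, Matrix.smul_apply, smul_eq_mul, sum_sub_distrib, ← mul_sum,
    G.sum_adjMatrix_mul_self_apply, G.sum_adjMatrix_apply, Matrix.one_apply, sum_ite_eq',
    mem_univ, if_true, hdeg]
  ring

end
end
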